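/- Let n ≥ 2 and let h : {0,1}* → {0,1}* be an r-uniform morphism with 2 ≤ r ≤ 4n and h(0) ≠ h(1). Let 𝐮 be an infinite fixed point of h (indexed from 1) that is not ultimately periodic. Assume: (i) h satisfies the algebraic condition for σ_n; (ii) every factor of 𝐮 of length r is markable with respect to h and 𝐮; (iii) every factor of 𝐮 of length 2 is a factor of 0110; (iv) ⌊(⌊(9n² − 6n + 1 + 2(r−1))/r⌋ + 2(r−1))/r⌋ ≤ 2; and (v) the word v = D_n(h(h(0110))) over Σ_n satisfies: every factor of v with period q has length at most q·n/(n−1), and for every q ≥ 1, v has no factor of period q and length q + n − 1. Then the infinite word w over Σ_n defined by w_i = i for 1 ≤ i ≤ n−1 and, for i ≥ 1, w_{i+n−1} = w_i if 𝐮(i) = 0 and otherwise w_{i+n−1} = the unique letter of Σ_n not in {w_i, w_{i+1}, …, w_{i+n−2}}, contains no factor of exponent greater than n/(n−1); that is, every finite factor of w with period q has length at most q·n/(n−1). -/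

import Mathlib

/-- The factor of the infinite word `w` starting at position `i`, of length `L`. -/
def wordOf {α : Type*} (w : ℕ → α) (i L : ℕ) : List α :=
  (List.range L).map fun k => w (i + k)

/-- The finite word `v` occurs in the infinite word `w` at position `i`. -/
def OccursAt {α : Type*} (v : List α) (w : ℕ → α) (i : ℕ) : Prop :=
  wordOf w i v.length = v

/-- The finite word `v` is a prefix of the infinite word `w`. -/
def PrefixOfInf {α : Type*} (v : List α) (w : ℕ → α) : Prop :=
  wordOf w 0 v.length = v

/-- The extension of the morphism `h` on `{0,1}` to binary words. -/
def mor (h : Bool → List Bool) (w : List Bool) : List Bool :=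
  (w.map h).flatten

/-- The infinite binary word `u` is a fixed point of the morphism `h`:
the image of any prefix of `u` is again a prefix of `u`. -/
def FixedPointOf (h : Bool → List Bool) (u : ℕ → Bool) : Prop :=
  ∀ p : List Bool, PrefixOfInf p u → PrefixOfInf (mor h p) u

/-- `v` is markable with respect to the `r`-uniform morphism `h` and its fixed point `u`:
whenever `h(X)xv` and `h(Y)yv` are prefixes of `u` with `|x|, |y| < r`, then `x = y`. -/
def Markable (h : Bool → List Bool) (r : ℕ) (u : ℕ → Bool) (v : List Bool) : Prop :=
  ∀ X Y x y : List Bool, x.length < r → y.length < r →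
    PrefixOfInf (mor h X ++ x ++ v) u → PrefixOfInf (mor h Y ++ y ++ v) u → x = y
/-- The finite word `u` has period `q`: `u_i = u_{i+q}` for all valid indices. -/
def HasPeriodL {α : Type*} (u : List α) (q : ℕ) : Prop :=
  ∀ i, i + q < u.length → u[i]? = u[i + q]?

/-- The images of the letters 0 and 1 under the Pansiot map `σ_n` (on `Fin n`, where the
value `k` represents the letter `k+1` of `Σ_n = {1,…,n}`): `σ_n(0)` sends the letter
`i ↦ i+1` for `1 ≤ i ≤ n−2`, sends `n−1 ↦ 1` and fixes `n`; `σ_n(1)` is the `n`-cycle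
`i ↦ i+1 (mod n)`. -/
def sigmaLetter (n : ℕ) : Bool → Equiv.Perm (Fin n)
  | true => finRotate n
  | false => if h : 1 ≤ n then Equiv.swap ⟨n - 1, by omega⟩ ⟨0, by omega⟩ * finRotate n else 1

/-- The monoid homomorphism `σ_n` on binary words (`σ_n(uw) = σ_n(u) ∘ σ_n(w)`). -/
def sigmaW (n : ℕ) (w : List Bool) : Equiv.Perm (Fin n) :=
  (w.map (sigmaLetter n)).prod

/-- `h` satisfies the algebraic condition for `σ_n`: some `τ` conjugates `σ_n(h(0))` to
`σ_n(0)` and `σ_n(h(1))` to `σ_n(1)`. -/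
def AlgCond (n : ℕ) (h : Bool → List Bool) : Prop :=
  ∃ τ : Equiv.Perm (Fin n),
    τ * sigmaW n (h false) * τ⁻¹ = sigmaLetter n false ∧
    τ * sigmaW n (h true) * τ⁻¹ = sigmaLetter n true

/-- Longest common prefix of two binary words. -/
def lcp (a b : List Bool) : List Bool :=
  ((a.zip b).takeWhile fun p => p.1 == p.2).map Prod.fst

/-- The occurrence at position `d` of the factor of length `L` of the infinite word `u`
is maximal with period `q`: it can be extended neither to the left nor to the right
keeping period `q`. -/
def MaxOcc (u : ℕ → Bool) (d L q : ℕ) : Prop :=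
  (d = 0 ∨ ¬ HasPeriodL (wordOf u (d - 1) (L + 1)) q) ∧
    ¬ HasPeriodL (wordOf u d (L + 1)) q

/-- The smallest letter of `Fin n` not belonging to `S` (when `S ≠ Fin n`). -/
def missingLetter {n : ℕ} (hn : 1 ≤ n) (S : Finset (Fin n)) : Fin n :=
  if h : Sᶜ.Nonempty then Sᶜ.min' h else ⟨0, hn⟩

/-- The word over `Σ_n` (represented by `Fin n`, value `k` = letter `k+1`) with
prefix `1 2 ⋯ (n-1)` whose Pansiot encoding is the infinite binary word `u`:
`w_k = k` (as a letter, `k+1`) for `k < n-1`, and `w_{k+n-1} = w_k` if `u k = 0`,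
while `w_{k+n-1}` is the letter not occurring among `w_k, …, w_{k+n-2}` if `u k = 1`. -/
def pansiotWord (n : ℕ) (hn : 2 ≤ n) (u : ℕ → Bool) (k : ℕ) : Fin n :=
  if hk : k < n - 1 then ⟨k, by omega⟩
  else if u (k - (n - 1)) then
    missingLetter (by omega)
      ((Finset.range (n - 1)).attach.image fun j =>
        pansiotWord n hn u (k - (n - 1) + j.1))
  else pansiotWord n hn u (k - (n - 1))
termination_by k
decreasing_by
  · have := j.2; simp only [Finset.mem_range] at this; omega
  · omega

/-- The Pansiot decoding `D_n(b)` of a finite binary word `b`: the word of length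
`|b| + n - 1` over `Σ_n` with prefix `1 2 ⋯ (n-1)` whose Pansiot encoding is `b`. -/
def pansiotDecode (n : ℕ) (hn : 2 ≤ n) (b : List Bool) : List (Fin n) :=
  (List.range (b.length + (n - 1))).map (pansiotWord n hn fun i => b.getD i false)

/-!
Write `ρ_i = σ_n(u_0 ⋯ u_{i-1})` (`prefixPerm n u i`). The window of `n - 1` letters of `w`
at position `i` is `ρ_i(1 2 ⋯ (n-1))`, so a factor of `w` is determined, up to a renaming of
`Σ_n`, by the factor of `u` coding it. Short repetitions (length `≤ r² + n`) are coded by factors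
of `h²(ab)` with `ab` a factor of `u`, hence occur, renamed, in `v = D_n(h²(0110))`, where they
are excluded.

A long repetition of period `q` in `w` forces `σ_n(u[i, i+q)) = 1` and period `q` on a long
factor of `u`. Markability then gives `r ∣ q`, and desubstituting the whole `h`-blocks yields a
factor of `u` with period `q / r` whose `σ_n`-image is trivial by the algebraic condition. The
descent ends with a factor of length `q + n - 1 ≤ r² + n` and period `q` in `w`, which would
again occur in `v`.
-/

section Words

variable {α : Type*}

@[simp] lemma length_wordOf (w : ℕ → α) (i L : ℕ) : (wordOf w i L).length = L := by
  simp [wordOf]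

lemma getElem_wordOf (w : ℕ → α) (i L k : ℕ) (hk : k < (wordOf w i L).length) :
    (wordOf w i L)[k] = w (i + k) := by
  simp [wordOf]

lemma wordOf_congr {w w' : ℕ → α} {i i' L : ℕ} (hw : ∀ k < L, w (i + k) = w' (i' + k)) :
    wordOf w i L = wordOf w' i' L :=
  List.ext_getElem (by simp) fun k hk _ => by
    simp only [getElem_wordOf]; exact hw k (by simpa using hk)

lemma wordOf_add (w : ℕ → α) (i a b : ℕ) :
    wordOf w i (a + b) = wordOf w i a ++ wordOf w (i + a) b := by
  simp [wordOf, List.range_add, Nat.add_assoc]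

lemma wordOf_one (w : ℕ → α) (i : ℕ) : wordOf w i 1 = [w i] := by
  simp [wordOf]

lemma take_wordOf (w : ℕ → α) (i : ℕ) {a m : ℕ} (ham : a ≤ m) :
    (wordOf w i m).take a = wordOf w i a := by
  rw [wordOf, ← List.map_take, List.take_range, Nat.min_eq_left ham, wordOf]

lemma wordOf_comp {β : Type*} (f : α → β) (w : ℕ → α) (i L : ℕ) :
    wordOf (f ∘ w) i L = (wordOf w i L).map f := by
  simp [wordOf]

lemma wordOf_infix_wordOf (w : ℕ → α) {i j m M : ℕ} (hij : i ≤ j) (hjm : j + m ≤ i + M) :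
    wordOf w j m <:+: wordOf w i M := by
  obtain ⟨a, rfl⟩ := Nat.exists_eq_add_of_le hij
  obtain ⟨b, rfl⟩ : ∃ b, M = a + m + b := ⟨M - (a + m), by omega⟩
  refine ⟨wordOf w i a, wordOf w (i + a + m) b, ?_⟩
  rw [wordOf_add, wordOf_add, ← Nat.add_assoc]

lemma hasPeriodL_wordOf_iff (w : ℕ → α) (i L q : ℕ) :
    HasPeriodL (wordOf w i L) q ↔ ∀ t, t + q < L → w (i + t) = w (i + t + q) := by
  simp only [HasPeriodL, length_wordOf]
  refine forall_congr' fun t => imp_congr_right fun ht => ?_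
  rw [List.getElem?_eq_getElem (by simp; omega), List.getElem?_eq_getElem (by simp; omega)]
  simp [getElem_wordOf, Nat.add_assoc]

lemma hasPeriodL_map_iff {β : Type*} {f : α → β} (hf : Function.Injective f) (l : List α)
    (q : ℕ) : HasPeriodL (l.map f) q ↔ HasPeriodL l q := by
  simp only [HasPeriodL, List.length_map, List.getElem?_map,
    (Option.map_injective hf).eq_iff]

lemma exists_wordOf_getD_of_infix {x b : List α} (hx : x <:+: b) (d : α) :
    ∃ j, j + x.length ≤ b.length ∧ wordOf (fun t => b.getD t d) j x.length = x := by
  obtain ⟨s, t, rfl⟩ := hx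
  refine ⟨s.length, by simp, List.ext_getElem (by simp) fun k hk _ => ?_⟩
  simp only [getElem_wordOf, List.getD_eq_getElem?_getD]
  rw [List.getElem?_append_left (by simp; simpa using hk), List.getElem?_append_right (by omega)]
  simp [List.getElem?_eq_getElem (show k < x.length by simpa using hk)]

end Words

section Morphisms

variable {h : Bool → List Bool} {r : ℕ} {u : ℕ → Bool}

@[simp] lemma mor_nil (h : Bool → List Bool) : mor h [] = [] := rfl

@[simp] lemma mor_cons (h : Bool → List Bool) (a : Bool) (w : List Bool) :
    mor h (a :: w) = h a ++ mor h w := by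
  simp [mor]

@[simp] lemma mor_append (h : Bool → List Bool) (v w : List Bool) :
    mor h (v ++ w) = mor h v ++ mor h w := by
  simp [mor]

lemma length_mor (hunif : ∀ b, (h b).length = r) (w : List Bool) :
    (mor h w).length = r * w.length := by
  induction w with
  | nil => simp
  | cons a w ih => simp [ih, hunif, Nat.mul_succ, Nat.add_comm]

lemma List.IsInfix.mor {v w : List Bool} (hvw : v <:+: w) (h : Bool → List Bool) :
    mor h v <:+: mor h w :=
  (hvw.map h).flatten

lemma FixedPointOf.mor_wordOf_zero (hfix : FixedPointOf h u) (hunif : ∀ b, (h b).length = r)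
    (m : ℕ) : mor h (wordOf u 0 m) = wordOf u 0 (r * m) := by
  have hpre := hfix (wordOf u 0 m) (by simp [PrefixOfInf])
  rwa [PrefixOfInf, length_mor hunif, length_wordOf, eq_comm] at hpre

lemma FixedPointOf.mor_wordOf (hfix : FixedPointOf h u) (hunif : ∀ b, (h b).length = r)
    (a m : ℕ) : mor h (wordOf u a m) = wordOf u (r * a) (r * m) := by
  have hsplit := hfix.mor_wordOf_zero hunif (a + m)
  rw [wordOf_add, mor_append, hfix.mor_wordOf_zero hunif, Nat.mul_add, wordOf_add] at hsplit
  simpa using hsplit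

lemma FixedPointOf.wordOf_block (hfix : FixedPointOf h u) (hunif : ∀ b, (h b).length = r)
    (k : ℕ) : wordOf u (r * k) r = h (u k) := by
  simpa [wordOf_one] using (hfix.mor_wordOf hunif k 1).symm

lemma FixedPointOf.mod_eq_of_markable (hfix : FixedPointOf h u) (hunif : ∀ b, (h b).length = r)
    (hr : 0 < r) {i j : ℕ} (hij : wordOf u i r = wordOf u j r)
    (hmark : Markable h r u (wordOf u i r)) : i % r = j % r := by
  -- `u[0, k+r) = h(u[0, ⌊k/r⌋)) · u[r⌊k/r⌋, k) · u[k, k+r)`, with a middle part shorter than `r`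
  have hprefix : ∀ k, PrefixOfInf (mor h (wordOf u 0 (k / r)) ++
      wordOf u (r * (k / r)) (k % r) ++ wordOf u k r) u := fun k => by
    have hk : wordOf u 0 k = wordOf u 0 (r * (k / r)) ++ wordOf u (r * (k / r)) (k % r) := by
      conv_lhs => rw [← Nat.div_add_mod k r]
      rw [wordOf_add, Nat.zero_add]
    rw [hfix.mor_wordOf_zero hunif, ← hk, PrefixOfInf, List.length_append, length_wordOf,
      length_wordOf, wordOf_add, Nat.zero_add]
  have hx := hmark _ _ _ _ (by simpa using Nat.mod_lt i hr) (by simpa using Nat.mod_lt j hr)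
    (hprefix i) (hij ▸ hprefix j)
  simpa using congrArg List.length hx

end Morphisms

lemma Equiv.Perm.eq_of_forall_ne_apply_eq {α : Type*} [Fintype α] [DecidableEq α]
    {σ τ : Equiv.Perm α} (a : α) (hστ : ∀ x ≠ a, σ x = τ x) : σ = τ := by
  have hsupp : (τ⁻¹ * σ).support ⊆ {a} := fun x hx => by
    by_contra hxa
    exact Equiv.Perm.mem_support.1 hx (by simp [hστ x (by simpa using hxa)])
  have hcard : (τ⁻¹ * σ).support.card = 0 := by
    have := (Finset.card_le_card hsupp).trans_eq (Finset.card_singleton a)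
    have := Equiv.Perm.card_support_ne_one (τ⁻¹ * σ)
    omega
  rw [Finset.card_eq_zero, Equiv.Perm.support_eq_empty_iff, inv_mul_eq_one] at hcard
  exact hcard.symm

section Sigma

variable {n : ℕ}

@[simp] lemma sigmaW_nil (n : ℕ) : sigmaW n [] = 1 := rfl

@[simp] lemma sigmaW_cons (n : ℕ) (b : Bool) (w : List Bool) :
    sigmaW n (b :: w) = sigmaLetter n b * sigmaW n w := by
  simp [sigmaW]

@[simp] lemma sigmaW_append (n : ℕ) (v w : List Bool) :
    sigmaW n (v ++ w) = sigmaW n v * sigmaW n w := by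
  simp [sigmaW]

lemma sigmaW_wordOf_add (n : ℕ) (u : ℕ → Bool) (i a b : ℕ) :
    sigmaW n (wordOf u i (a + b)) = sigmaW n (wordOf u i a) * sigmaW n (wordOf u (i + a) b) := by
  rw [wordOf_add, sigmaW_append]

lemma sigmaLetter_apply_of_lt (b : Bool) {k : ℕ} (hk : k + 2 < n) :
    sigmaLetter n b ⟨k, by omega⟩ = ⟨k + 1, by omega⟩ := by
  obtain ⟨m, rfl⟩ : ∃ m, n = m + 1 := ⟨n - 1, by omega⟩
  have hrot : finRotate (m + 1) ⟨k, by omega⟩ = ⟨k + 1, by omega⟩ := by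
    rw [finRotate_apply]; ext; simp [Fin.val_add]; omega
  cases b
  · simp only [sigmaLetter, dif_pos (Nat.le_add_left 1 m), Equiv.Perm.mul_apply, hrot]
    exact Equiv.swap_apply_of_ne_of_ne (by simp; omega) (by simp)
  · exact hrot

lemma sigmaLetter_false_apply_sub_two (hn : 2 ≤ n) :
    sigmaLetter n false ⟨n - 2, by omega⟩ = ⟨0, by omega⟩ := by
  obtain ⟨m, rfl⟩ : ∃ m, n = m + 2 := ⟨n - 2, by omega⟩
  simp only [sigmaLetter, dif_pos (show 1 ≤ m + 2 by omega), Equiv.Perm.mul_apply]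
  convert Equiv.swap_apply_left _ _
  rw [finRotate_apply]; simp [Fin.val_add]

lemma sigmaLetter_true_apply_sub_two (hn : 2 ≤ n) :
    sigmaLetter n true ⟨n - 2, by omega⟩ = ⟨n - 1, by omega⟩ := by
  obtain ⟨m, rfl⟩ : ∃ m, n = m + 2 := ⟨n - 2, by omega⟩
  simp only [sigmaLetter]
  rw [finRotate_apply]; ext; simp [Fin.val_add]

lemma sigmaLetter_injective (hn : 2 ≤ n) : Function.Injective (sigmaLetter n) := by
  have hne : sigmaLetter n false ≠ sigmaLetter n true := fun heq => by
    have := congrArg (fun σ => (σ ⟨n - 2, by omega⟩ : Fin n).val) heq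
    simp only [sigmaLetter_false_apply_sub_two hn, sigmaLetter_true_apply_sub_two hn] at this
    omega
  intro a b hab
  cases a <;> cases b <;> first | rfl | exact absurd hab hne | exact absurd hab.symm hne

lemma AlgCond.exists_conj_sigmaW_mor {h : Bool → List Bool} (halg : AlgCond n h) :
    ∃ τ : Equiv.Perm (Fin n), ∀ w, τ * sigmaW n (mor h w) * τ⁻¹ = sigmaW n w := by
  obtain ⟨τ, hτ0, hτ1⟩ := halg
  refine ⟨τ, fun w => ?_⟩
  induction w with
  | nil => simp
  | cons b w ih =>
    have hb : τ * sigmaW n (h b) * τ⁻¹ = sigmaLetter n b := by cases b <;> assumption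
    rw [mor_cons, sigmaW_append, sigmaW_cons, ← hb, ← ih]
    group

end Sigma

section Pansiot

variable {n : ℕ} (hn : 2 ≤ n)

def prefixPerm (n : ℕ) (u : ℕ → Bool) (i : ℕ) : Equiv.Perm (Fin n) :=
  sigmaW n (wordOf u 0 i)

lemma prefixPerm_add (u : ℕ → Bool) (i m : ℕ) :
    prefixPerm n u (i + m) = prefixPerm n u i * sigmaW n (wordOf u i m) := by
  rw [prefixPerm, sigmaW_wordOf_add, Nat.zero_add, prefixPerm]

lemma prefixPerm_succ (u : ℕ → Bool) (i : ℕ) :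
    prefixPerm n u (i + 1) = prefixPerm n u i * sigmaLetter n (u i) := by
  simp [prefixPerm_add, wordOf_one]

include hn in
lemma missingLetter_image_perm (ρ : Equiv.Perm (Fin n)) (f : ℕ → Fin n)
    (hf : ∀ j (hj : j < n - 1), f j = ρ ⟨j, by omega⟩) :
    missingLetter (by omega) ((Finset.range (n - 1)).attach.image fun j => f j.1) =
      ρ ⟨n - 1, by omega⟩ := by
  have hcompl :
      ((Finset.range (n - 1)).attach.image fun j => f j.1)ᶜ = {ρ ⟨n - 1, by omega⟩} := by
    ext x
    simp only [Finset.mem_compl, Finset.mem_image, Finset.mem_attach, true_and,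
      Finset.mem_singleton, Subtype.exists, Finset.mem_range]
    constructor
    · intro hx
      by_contra hne
      have hlt : (ρ.symm x).val < n - 1 := by
        have : (ρ.symm x).val ≠ n - 1 := fun h => hne (by
          rw [show (⟨n - 1, _⟩ : Fin n) = ρ.symm x from Fin.ext h.symm]; simp)
        have := (ρ.symm x).isLt
        omega
      exact hx ⟨_, hlt, by rw [hf _ hlt]; simp⟩
    · rintro rfl ⟨j, hj, hfj⟩
      rw [hf j hj] at hfj
      have := congrArg Fin.val (ρ.injective hfj)
      simp at this; omega
  rw [missingLetter, dif_pos (by rw [hcompl]; exact Finset.singleton_nonempty _)]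
  simp only [hcompl, Finset.min'_singleton]

include hn in
lemma pansiotWord_add_of_lt (u : ℕ → Bool) (i : ℕ) {k : ℕ} (hk : k < n - 1) :
    pansiotWord n hn u (i + k) = prefixPerm n u i ⟨k, by omega⟩ := by
  induction i generalizing k with
  | zero =>
    rw [Nat.zero_add, pansiotWord, dif_pos hk]
    rfl
  | succ i ih =>
    rw [prefixPerm_succ, Equiv.Perm.mul_apply]
    rcases Nat.lt_or_ge (k + 2) n with hk2 | hk2
    · rw [sigmaLetter_apply_of_lt _ hk2, ← ih (by omega), Nat.add_right_comm, Nat.add_assoc]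
    obtain rfl : k = n - 2 := by omega
    rw [show i + 1 + (n - 2) = i + (n - 1) by omega, pansiotWord,
      dif_neg (by omega), Nat.add_sub_cancel]
    cases hu : u i
    · rw [if_neg Bool.false_ne_true, sigmaLetter_false_apply_sub_two hn, ← ih (by omega),
        Nat.add_zero]
    · rw [if_pos rfl, sigmaLetter_true_apply_sub_two hn]
      exact missingLetter_image_perm hn (prefixPerm n u i) (fun j => pansiotWord n hn u (i + j))
        fun j hj => ih hj

include hn in
lemma exists_wordOf_pansiotWord_eq_map {u₁ u₂ : ℕ → Bool} {i₁ i₂ m L : ℕ}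
    (heq : wordOf u₁ i₁ m = wordOf u₂ i₂ m) (hL : L ≤ m + (n - 1)) :
    ∃ π : Equiv.Perm (Fin n),
      wordOf (pansiotWord n hn u₁) i₁ L = (wordOf (pansiotWord n hn u₂) i₂ L).map π := by
  refine ⟨prefixPerm n u₁ i₁ * (prefixPerm n u₂ i₂)⁻¹, ?_⟩
  rw [← wordOf_comp]
  refine wordOf_congr fun k hk => ?_
  obtain ⟨a, c, hc, ham, rfl⟩ : ∃ a c, c < n - 1 ∧ a ≤ m ∧ k = a + c :=
    ⟨k - min k (n - 2), min k (n - 2), by omega, by omega, by omega⟩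
  have hσ : sigmaW n (wordOf u₁ i₁ a) = sigmaW n (wordOf u₂ i₂ a) := by
    rw [← take_wordOf _ _ ham, heq, take_wordOf _ _ ham]
  simp [← Nat.add_assoc, pansiotWord_add_of_lt hn _ _ hc, prefixPerm_add, hσ]

include hn in
lemma hasPeriodL_wordOf_pansiotWord {u : ℕ → Bool} {i q : ℕ}
    (hσ : sigmaW n (wordOf u i q) = 1) :
    HasPeriodL (wordOf (pansiotWord n hn u) i (q + (n - 1))) q := by
  rw [hasPeriodL_wordOf_iff]
  intro t ht
  rw [Nat.add_right_comm, pansiotWord_add_of_lt hn _ _ (by omega),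
    pansiotWord_add_of_lt hn _ _ (by omega), prefixPerm_add, hσ, mul_one]

include hn in
lemma sigmaW_eq_one_of_hasPeriodL_pansiotWord {u : ℕ → Bool} {i q e : ℕ}
    (hper : HasPeriodL (wordOf (pansiotWord n hn u) i (q + e + (n - 1))) q) :
    sigmaW n (wordOf u i q) = 1 ∧ ∀ t < e, u (i + t) = u (i + t + q) := by
  rw [hasPeriodL_wordOf_iff] at hper
  have hρ : ∀ j ≤ e, prefixPerm n u (i + j + q) = prefixPerm n u (i + j) := fun j hj =>
    Equiv.Perm.eq_of_forall_ne_apply_eq ⟨n - 1, by omega⟩ fun ⟨k, hk⟩ hne => by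
      have hk' : k < n - 1 := by
        have : k ≠ n - 1 := fun h => hne (Fin.ext h)
        omega
      rw [← pansiotWord_add_of_lt hn _ _ hk', ← pansiotWord_add_of_lt hn _ _ hk',
        Nat.add_right_comm, Nat.add_assoc i, hper (j + k) (by omega), Nat.add_assoc i]
  refine ⟨?_, fun t ht => sigmaLetter_injective hn ?_⟩
  · simpa [prefixPerm_add] using hρ 0 (Nat.zero_le e)
  · have hsucc := hρ (t + 1) ht
    rw [← Nat.add_assoc, Nat.add_right_comm, prefixPerm_succ, prefixPerm_succ,
      hρ t ht.le] at hsucc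
    exact (mul_left_cancel hsucc).symm

end Pansiot

section ShortFactors

variable {n : ℕ} (hn : 2 ≤ n) {h : Bool → List Bool} {r : ℕ} {u : ℕ → Bool}

lemma pansiotDecode_eq_wordOf (b : List Bool) :
    pansiotDecode n hn b =
      wordOf (pansiotWord n hn fun t => b.getD t false) 0 (b.length + (n - 1)) := by
  simp [pansiotDecode, wordOf]

lemma FixedPointOf.infix_mor_mor_of_length_le (hfix : FixedPointOf h u)
    (hunif : ∀ b, (h b).length = r) (hr : 0 < r)
    (hfac2 : ∀ v : List Bool, v.length = 2 → (∃ i, OccursAt v u i) →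
      v <:+: [false, true, true, false])
    (i : ℕ) {m : ℕ} (hm : m ≤ r * r + 1) :
    wordOf u i m <:+: mor h (mor h [false, true, true, false]) := by
  set Q := r * r
  set K := i / Q
  have hQ : 0 < Q := Nat.mul_pos hr hr
  have hi : Q * K + i % Q = i := Nat.div_add_mod i Q
  have hs : i % Q < Q := Nat.mod_lt i hQ
  calc wordOf u i m <:+: wordOf u (Q * K) (Q * 2) := wordOf_infix_wordOf u (by omega) (by omega)
    _ = mor h (mor h (wordOf u K 2)) := by
      rw [hfix.mor_wordOf hunif, hfix.mor_wordOf hunif, Nat.mul_assoc, Nat.mul_assoc]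
    _ <:+: mor h (mor h [false, true, true, false]) :=
      ((hfac2 _ (length_wordOf u K 2) ⟨K, by simp [OccursAt]⟩).mor h).mor h

include hn in
lemma FixedPointOf.exists_infix_pansiotDecode (hfix : FixedPointOf h u)
    (hunif : ∀ b, (h b).length = r) (hr : 0 < r)
    (hfac2 : ∀ v : List Bool, v.length = 2 → (∃ i, OccursAt v u i) →
      v <:+: [false, true, true, false])
    {i L q : ℕ} (hL : L ≤ r * r + n) (hper : HasPeriodL (wordOf (pansiotWord n hn u) i L) q) :
    ∃ f, f <:+: pansiotDecode n hn (mor h (mor h [false, true, true, false])) ∧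
      f.length = L ∧ HasPeriodL f q := by
  obtain ⟨j, hjb, hj⟩ := exists_wordOf_getD_of_infix
    (hfix.infix_mor_mor_of_length_le hunif hr hfac2 i (m := L - (n - 1)) (by omega)) false
  rw [length_wordOf] at hjb hj
  obtain ⟨π, hπ⟩ := exists_wordOf_pansiotWord_eq_map hn hj.symm (L := L) (by omega)
  rw [hπ, hasPeriodL_map_iff π.injective] at hper
  refine ⟨_, ?_, length_wordOf _ _ _, hper⟩
  rw [pansiotDecode_eq_wordOf]
  exact wordOf_infix_wordOf _ (Nat.zero_le _) (by omega)

end ShortFactors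

lemma cast_le_mul_div_iff {n : ℕ} (hn : 2 ≤ n) (L q : ℕ) :
    (L : ℚ) ≤ (q : ℚ) * n / (n - 1) ↔ L * (n - 1) ≤ q * n := by
  have hn' : (0 : ℚ) < n - 1 := by
    have : (2 : ℚ) ≤ n := by exact_mod_cast hn
    linarith
  rw [le_div_iff₀ hn', ← Nat.cast_one, ← Nat.cast_sub (by omega)]
  exact_mod_cast Iff.rfl

lemma three_mul_sub_one_le_of_iter {n r : ℕ} (hn : 2 ≤ n) (hr : 0 < r)
    (hiter : ((9 * n ^ 2 - 6 * n + 1 + 2 * (r - 1)) / r + 2 * (r - 1)) / r ≤ 2) :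
    3 * n - 1 ≤ r := by
  obtain ⟨m, rfl⟩ : ∃ m, n = m + 2 := ⟨n - 2, by omega⟩
  have hsq : 9 * (m + 2) ^ 2 - 6 * (m + 2) + 1 = (3 * m + 5) ^ 2 := by
    have : 6 * (m + 2) ≤ 9 * (m + 2) ^ 2 := by nlinarith
    zify [this]; ring
  rw [hsq] at hiter
  have h₁ := (Nat.div_lt_iff_lt_mul hr).1 (Nat.lt_succ_of_le hiter)
  have h₂ : (3 * m + 5) ^ 2 + 2 * (r - 1) < (r + 2) * r :=
    (Nat.div_lt_iff_lt_mul hr).1 (by omega)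
  by_contra! hlt
  have : r * r ≤ (3 * m + 4) * (3 * m + 4) := Nat.mul_le_mul (by omega) (by omega)
  zify [hr] at h₂
  nlinarith

/- The bound `q ≤ (n - 1) (e + n + 1)` relaxes `(q + e + n - 1) (n - 1) > q n` (exponent
`> n/(n-1)`); the slack `2 (n - 1)` makes it survive the descent, also for `n = 2`. -/

lemma exists_eq_add_of_mul_lt {n L q : ℕ} (hn : 2 ≤ n) (hlt : q * n < L * (n - 1))
    (hL : n * n ≤ L) : ∃ e, L = q + e + (n - 1) ∧ q ≤ (n - 1) * (e + n + 1) := by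
  obtain ⟨N, rfl⟩ : ∃ N, n = N + 1 := ⟨n - 1, by omega⟩
  rw [Nat.add_sub_cancel] at hlt ⊢
  have hqL : q + N ≤ L := by
    by_contra! h
    have : (L + 1 - N) * (N + 1) ≤ q * (N + 1) := Nat.mul_le_mul_right _ (by omega)
    zify [show N ≤ L + 1 by nlinarith] at this
    nlinarith
  refine ⟨L - q - N, by omega, ?_⟩
  obtain ⟨e, rfl⟩ : ∃ e, L = q + N + e := ⟨L - q - N, by omega⟩
  rw [show q + N + e - q - N = e by omega]
  nlinarith

lemma le_sub_one_mul_of_mul_le {n r q e e' : ℕ} (hr : 0 < r) (he : e ≤ r * e' + 2 * (r - 1))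
    (hq : r * q ≤ (n - 1) * (e + n + 1)) : q ≤ (n - 1) * (e' + n + 1) := by
  obtain ⟨s, rfl⟩ : ∃ s, r = s + 1 := ⟨r - 1, by omega⟩
  rcases n with _ | N
  · simp at hq; simp [hq]
  rw [Nat.add_sub_cancel] at he hq ⊢
  refine Nat.le_of_mul_le_mul_left ?_ hr
  calc (s + 1) * q ≤ N * (e + (N + 1) + 1) := hq
    _ ≤ N * ((s + 1) * e' + 2 * s + (N + 1) + 1) := Nat.mul_le_mul_left N (by omega)
    _ ≤ N * ((s + 1) * e' + 2 * s + (N + 1) + 1) + s * N * N := Nat.le_add_right _ _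
    _ = (s + 1) * (N * (e' + (N + 1) + 1)) := by ring

lemma le_mul_self_add_one_of_le_sub_one_mul {n r q e : ℕ} (he : e < r) (hrn : 3 * n - 1 ≤ r)
    (hq : q ≤ (n - 1) * (e + n + 1)) : q ≤ r * r + 1 := by
  rcases n with _ | N
  · simp at hq; omega
  rw [Nat.add_sub_cancel] at hq
  have h₁ : N * (e + (N + 1) + 1) ≤ N * (r + N + 1) := Nat.mul_le_mul_left N (by omega)
  have h₂ : (3 * N + 2) * r ≤ r * r := Nat.mul_le_mul_right r (by omega)
  have h₃ : (3 * N + 2) * (3 * N + 2) ≤ r * r := Nat.mul_le_mul (by omega) (by omega)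
  nlinarith

section Descent

variable {n : ℕ} (hn : 2 ≤ n) {h : Bool → List Bool} {r : ℕ} {u : ℕ → Bool}

/-- `σ_n(u[j+1, j+q+1))` is conjugate to `σ_n(u[j, j+q))` by `σ_n(u_j)` when `u_j = u_{j+q}`. -/
lemma sigmaW_wordOf_add_eq_one {i q e : ℕ} (hper : ∀ t < e, u (i + t) = u (i + t + q))
    (hσ : sigmaW n (wordOf u i q) = 1) {t : ℕ} (ht : t ≤ e) :
    sigmaW n (wordOf u (i + t) q) = 1 := by
  induction t with
  | zero => simpa using hσ
  | succ t ih =>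
    have hsplit := sigmaW_wordOf_add n u (i + t) 1 q
    rw [Nat.add_comm 1 q, sigmaW_wordOf_add, ih (by omega), wordOf_one, wordOf_one,
      ← hper t (by omega)] at hsplit
    simpa [Nat.add_assoc] using hsplit

lemma FixedPointOf.dvd_of_markable (hfix : FixedPointOf h u) (hunif : ∀ b, (h b).length = r)
    (hr : 0 < r)
    (hmark : ∀ v : List Bool, v.length = r → (∃ i, OccursAt v u i) → Markable h r u v)
    {i q e : ℕ} (he : r ≤ e) (hper : ∀ t < e, u (i + t) = u (i + t + q)) : r ∣ q := by
  have hij : wordOf u i r = wordOf u (i + q) r :=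
    wordOf_congr fun t ht => by rw [hper t (by omega), Nat.add_right_comm]
  have hmod := hfix.mod_eq_of_markable hunif hr hij
    (hmark _ (length_wordOf u i r) ⟨i, by simp [OccursAt]⟩)
  simpa using (Nat.modEq_iff_dvd' (Nat.le_add_right i q)).1 hmod

lemma FixedPointOf.eq_of_wordOf_block (hfix : FixedPointOf h u) (hunif : ∀ b, (h b).length = r)
    (hne : h false ≠ h true) {i e q' : ℕ} (hper : ∀ t < e, u (i + t) = u (i + t + r * q'))
    {K : ℕ} (hK₁ : i ≤ r * K) (hK₂ : r * K + r ≤ i + e) : u K = u (K + q') := by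
  have hblock : h (u K) = h (u (K + q')) := by
    rw [← hfix.wordOf_block hunif, ← hfix.wordOf_block hunif, Nat.mul_add]
    obtain ⟨d, hd⟩ := Nat.exists_eq_add_of_le hK₁
    exact wordOf_congr fun t ht => by
      rw [hd]; convert hper (d + t) (by omega) using 2 <;> omega
  cases hK : u K <;> cases hK' : u (K + q') <;> simp_all

lemma FixedPointOf.descent_step (hfix : FixedPointOf h u) (hunif : ∀ b, (h b).length = r)
    (hr : 0 < r) (hne : h false ≠ h true)
    (hmark : ∀ v : List Bool, v.length = r → (∃ i, OccursAt v u i) → Markable h r u v)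
    {τ : Equiv.Perm (Fin n)} (hτ : ∀ w, τ * sigmaW n (mor h w) * τ⁻¹ = sigmaW n w)
    {i q e : ℕ} (he : r ≤ e) (hper : ∀ t < e, u (i + t) = u (i + t + q))
    (hσ : sigmaW n (wordOf u i q) = 1) :
    ∃ q' i' e', q = r * q' ∧ e ≤ r * e' + 2 * (r - 1) ∧
      (∀ t < e', u (i' + t) = u (i' + t + q')) ∧ sigmaW n (wordOf u i' q') = 1 := by
  obtain ⟨q', rfl⟩ := hfix.dvd_of_markable hunif hr hmark he hper
  -- the whole `h`-blocks inside `u[i, i+e)` are those with indices in `[i', A)`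
  set i' := (i + r - 1) / r
  set A := (i + e) / r
  have hi'₁ : r * i' ≤ i + r - 1 := Nat.mul_div_le _ _
  have hi'₂ : i + r - 1 < r * i' + r := Nat.lt_mul_div_self_add hr
  have hA₁ : r * A ≤ i + e := Nat.mul_div_le _ _
  have hA₂ : i + e < r * A + r := Nat.lt_mul_div_self_add hr
  have hi'A : i' ≤ A := Nat.div_le_div_right (by omega)
  have hrA : r * (A - i') = r * A - r * i' := Nat.mul_sub r A i'
  refine ⟨q', i', A - i', rfl, by omega, fun t ht => ?_, ?_⟩
  · have hblock : r * (i' + t) + r ≤ r * A := by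
      rw [← Nat.mul_succ]; exact Nat.mul_le_mul_left r (by omega)
    exact hfix.eq_of_wordOf_block hunif hne hper (by rw [Nat.mul_add]; omega) (by omega)
  · have hσ' := sigmaW_wordOf_add_eq_one hper hσ (t := r * i' - i) (by omega)
    rw [Nat.add_sub_cancel' (by omega), ← hfix.mor_wordOf hunif] at hσ'
    rw [← hτ, hσ', mul_one, mul_inv_cancel]

include hn in
lemma FixedPointOf.sigmaW_wordOf_ne_one (hfix : FixedPointOf h u)
    (hunif : ∀ b, (h b).length = r) (hr : 2 ≤ r) (hne : h false ≠ h true)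
    (hmark : ∀ v : List Bool, v.length = r → (∃ i, OccursAt v u i) → Markable h r u v)
    (hfac2 : ∀ v : List Bool, v.length = 2 → (∃ i, OccursAt v u i) →
      v <:+: [false, true, true, false])
    {τ : Equiv.Perm (Fin n)} (hτ : ∀ w, τ * sigmaW n (mor h w) * τ⁻¹ = sigmaW n w)
    (hrn : 3 * n - 1 ≤ r)
    (hdecode : ∀ q : ℕ, 1 ≤ q → ¬ ∃ f : List (Fin n),
      f <:+: pansiotDecode n hn (mor h (mor h [false, true, true, false])) ∧
      f.length = q + (n - 1) ∧ HasPeriodL f q)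
    {q i e : ℕ} (hq : 1 ≤ q) (hper : ∀ t < e, u (i + t) = u (i + t + q))
    (hqe : q ≤ (n - 1) * (e + n + 1)) : sigmaW n (wordOf u i q) ≠ 1 := by
  induction q using Nat.strong_induction_on generalizing i e with
  | _ q ih =>
  intro hσ
  rcases Nat.lt_or_ge e r with he | he
  · have hqr := le_mul_self_add_one_of_le_sub_one_mul he hrn hqe
    exact hdecode q hq (hfix.exists_infix_pansiotDecode hn hunif (by omega) hfac2 (by omega)
      (hasPeriodL_wordOf_pansiotWord hn hσ))
  · obtain ⟨q', i', e', rfl, he', hper', hσ'⟩ :=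
      hfix.descent_step hunif (by omega) hne hmark hτ he hper hσ
    have hq' : 1 ≤ q' := Nat.pos_of_mul_pos_left hq
    exact ih q' (by nlinarith) hq' hper' (le_sub_one_mul_of_mul_le (by omega) he' hqe) hσ'

end Descent

theorem main_construction_general (n : ℕ) (hn : 2 ≤ n)
    (h : Bool → List Bool) (r : ℕ) (hr₁ : 2 ≤ r)
    (h0 : (h false).length = r) (h1 : (h true).length = r) (hne : h false ≠ h true)
    (u : ℕ → Bool) (hfix : FixedPointOf h u)
    (halg : AlgCond n h)
    (hmark : ∀ v : List Bool, v.length = r → (∃ i, OccursAt v u i) → Markable h r u v)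
    (hfac2 : ∀ v : List Bool, v.length = 2 → (∃ i, OccursAt v u i) →
      v <:+: [false, true, true, false])
    (hiter : ((9 * n ^ 2 - 6 * n + 1 + 2 * (r - 1)) / r + 2 * (r - 1)) / r ≤ 2)
    (hcheck :
      (∀ f : List (Fin n), ∀ q : ℕ,
          f <:+: pansiotDecode n hn (mor h (mor h [false, true, true, false])) →
          1 ≤ q → HasPeriodL f q → (f.length : ℚ) ≤ (q : ℚ) * n / (n - 1)) ∧
        (∀ q : ℕ, 1 ≤ q → ¬ ∃ f : List (Fin n),
          f <:+: pansiotDecode n hn (mor h (mor h [false, true, true, false])) ∧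
          f.length = q + (n - 1) ∧ HasPeriodL f q)) :
    ∀ i L q : ℕ, 1 ≤ q → HasPeriodL (wordOf (pansiotWord n hn u) i L) q →
      (L : ℚ) ≤ (q : ℚ) * n / (n - 1) := by
  intro i L q hq hper
  have hunif : ∀ b, (h b).length = r := Bool.forall_bool.2 ⟨h0, h1⟩
  have hrn := three_mul_sub_one_le_of_iter hn (by omega) hiter
  rcases le_or_gt L (r * r + n) with hL | hL
  · obtain ⟨f, hf, rfl, hfq⟩ :=
      hfix.exists_infix_pansiotDecode hn hunif (by omega) hfac2 hL hper
    exact hcheck.1 f q hf hq hfq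
  rw [cast_le_mul_div_iff hn]
  by_contra! hlt
  have hnL : n * n ≤ L :=
    (Nat.mul_le_mul (show n ≤ r by omega) (show n ≤ r by omega)).trans (by omega)
  obtain ⟨e, rfl, hqe⟩ := exists_eq_add_of_mul_lt hn hlt hnL
  obtain ⟨hσ, hperu⟩ := sigmaW_eq_one_of_hasPeriodL_pansiotWord hn hper
  obtain ⟨τ, hτ⟩ := halg.exists_conj_sigmaW_mor
  exact hfix.sigmaW_wordOf_ne_one hn hunif hr₁ hne hmark hfac2 hτ hrn hcheck.2 hq hperu hqe hσ

/-- The main construction: if the `r`-uniform morphism `h` (with `2 ≤ r ≤ 4n` and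
`h(0) ≠ h(1)`) satisfies the algebraic condition for `σ_n`, every length-`r` factor of
its non-ultimately-periodic fixed point `𝐮` is markable, every length-2 factor of `𝐮`
is a factor of `0110`, `⌊(⌊(9n²−6n+1+2(r−1))/r⌋+2(r−1))/r⌋ ≤ 2`, and the Pansiot
decoding `v = D_n(h²(0110))` contains no factor of exponent `> n/(n−1)` and no factor
of period `q` and length `q+n−1`, then the word `w` over `Σ_n` with prefix
`1 2 ⋯ (n−1)` and Pansiot encoding `𝐮` contains no factor of exponent greater than
`n/(n−1)`: every factor of `w` with period `q ≥ 1` has length at most `q·n/(n−1)`. -/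
theorem main_construction (n : ℕ) (hn : 2 ≤ n)
    (h : Bool → List Bool) (r : ℕ) (hr₁ : 2 ≤ r) (hr₂ : r ≤ 4 * n)
    (h0 : (h false).length = r) (h1 : (h true).length = r) (hne : h false ≠ h true)
    (u : ℕ → Bool) (hfix : FixedPointOf h u)
    (hnup : ¬ ∃ N p : ℕ, 1 ≤ p ∧ ∀ i, N ≤ i → u (i + p) = u i)
    (halg : AlgCond n h)
    (hmark : ∀ v : List Bool, v.length = r → (∃ i, OccursAt v u i) → Markable h r u v)
    (hfac2 : ∀ v : List Bool, v.length = 2 → (∃ i, OccursAt v u i) →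
      v <:+: [false, true, true, false])
    (hiter : ((9 * n ^ 2 - 6 * n + 1 + 2 * (r - 1)) / r + 2 * (r - 1)) / r ≤ 2)
    (hcheck :
      (∀ f : List (Fin n), ∀ q : ℕ,
          f <:+: pansiotDecode n hn (mor h (mor h [false, true, true, false])) →
          1 ≤ q → HasPeriodL f q → (f.length : ℚ) ≤ (q : ℚ) * n / (n - 1)) ∧
        (∀ q : ℕ, 1 ≤ q → ¬ ∃ f : List (Fin n),
          f <:+: pansiotDecode n hn (mor h (mor h [false, true, true, false])) ∧
          f.length = q + (n - 1) ∧ HasPeriodL f q)) :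
    ∀ i L q : ℕ, 1 ≤ q → HasPeriodL (wordOf (pansiotWord n hn u) i L) q →
      (L : ℚ) ≤ (q : ℚ) * n / (n - 1) :=
  main_construction_general n hn h r hr₁ h0 h1 hne u hfix halg hmark hfac2 hiter hcheck
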